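/- arXiv:1805.08024 — 4 statements merged into one kernel-verified Lean document; each statement's English description precedes it below -/
import Mathlib

section
/- Let φ : ℝ² → ℝ ∪ {+∞} be lower semicontinuous with {x : φ(x) < +∞} a nonempty subset of the unit circle S¹. Then conv(φ)(ξ) = φ(ξ) for every ξ ∈ S¹. -/
open Set MeasureTheory
open scoped Topology ENNReal

noncomputable section

/-- The plane ℝ² with the Euclidean inner product. -/
abbrev E2 := EuclideanSpace ℝ (Fin 2)

/-- The unit circle S¹ ⊂ ℝ². -/
def S1 : Set E2 := Metric.sphere 0 1

/-- The closed unit disk 𝔻̄ ⊂ ℝ². -/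
def cDisk : Set E2 := Metric.closedBall 0 1

/-- The essential domain of a function `u : ℝ² → ℝ ∪ {+∞}`. -/
def essDom (u : E2 → EReal) : Set E2 := {x | u x < ⊤}

/-- The domain of support `Ω_u`: the interior of the essential domain. -/
def suppDom (u : E2 → EReal) : Set E2 := interior (essDom u)

/-- The subdifferential of `u` at `x`. -/
def subdiff (u : E2 → EReal) (x : E2) : Set E2 :=
  {p | ∀ z : E2, u x + ((inner ℝ p (z - x) : ℝ) : EReal) ≤ u z}

/-- The Monge–Ampère measure of `u` on a set `ω`. -/
def MAmeasure (u : E2 → EReal) (ω : Set E2) : ℝ≥0∞ :=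
  volume (⋃ x ∈ ω, subdiff u x)

/-- `u` is gradient-surjective: the subdifferentials over Ω_u cover ℝ². -/
def GradientSurjective (u : E2 → EReal) : Prop :=
  ⋃ x ∈ suppDom u, subdiff u x = univ

/-- The convex envelope: pointwise sup of affine minorants. -/
def convEnv (φ : E2 → EReal) (x : E2) : EReal :=
  ⨆ ℓ ∈ {ℓ : E2 →ᵃ[ℝ] ℝ | ∀ y, (ℓ y : EReal) ≤ φ y}, ((ℓ x : ℝ) : EReal)

/-- Ω_φ: the interior of the convex hull of the finiteness set of φ on S¹. -/
def OmegaPhi (φ : E2 → EReal) : Set E2 :=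
  interior (convexHull ℝ {ξ ∈ S1 | φ ξ < ⊤})

/-- Convexity of an ℝ ∪ {+∞}-valued function, via convexity of the epigraph. -/
def IsConvexEReal (u : E2 → EReal) : Prop :=
  Convex ℝ {p : E2 × ℝ | u p.1 ≤ (p.2 : EReal)}

/-- Proper closed convex function with values in ℝ ∪ {+∞}. -/
def IsClosedProperConvex (u : E2 → EReal) : Prop :=
  (∃ x, u x ≠ ⊤) ∧ (∀ x, u x ≠ ⊥) ∧ LowerSemicontinuous u ∧ IsConvexEReal u

/-- The Hessian determinant det D²f of a real function on ℝ². -/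
def hessDet (f : E2 → ℝ) (z : E2) : ℝ :=
  Matrix.det (Matrix.of fun i j : Fin 2 =>
    fderiv ℝ (fun w => fderiv ℝ f w (EuclideanSpace.single i 1)) z (EuclideanSpace.single j 1))

/-- φ is admissible boundary data: φ : S¹ → ℝ ∪ {+∞} (extended by +∞ off S¹),
lower semicontinuous and finite at at least three distinct points. -/
def IsAdmissiblePhi (φ : E2 → EReal) : Prop :=
  (∀ x, x ∉ S1 → φ x = ⊤) ∧ (∀ x, φ x ≠ ⊥) ∧ LowerSemicontinuous φ ∧
  ∃ ξ₁ ∈ S1, ∃ ξ₂ ∈ S1, ∃ ξ₃ ∈ S1,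
    ξ₁ ≠ ξ₂ ∧ ξ₁ ≠ ξ₃ ∧ ξ₂ ≠ ξ₃ ∧ φ ξ₁ ≠ ⊤ ∧ φ ξ₂ ≠ ⊤ ∧ φ ξ₃ ≠ ⊤

/-- A solution of the Minkowski problem with data (φ, ψ). -/
def IsMinkowskiSolution (φ : E2 → EReal) (ψ : E2 → ℝ) (u : E2 → EReal) : Prop :=
  IsClosedProperConvex u ∧
  (∀ z, z ∉ OmegaPhi φ → u z = convEnv φ z) ∧
  (∀ z ∈ OmegaPhi φ, u z ≠ ⊤) ∧
  ContDiffOn ℝ 2 (fun z => (u z).toReal) (OmegaPhi φ) ∧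
  ∀ z ∈ OmegaPhi φ, hessDet (fun w => (u w).toReal) z
    = (1 / ψ z) * ((1 - ‖z‖ ^ 2) ^ 2)⁻¹


/-! Given a real `c < φ ξ`, lower semicontinuity gives `φ > c` near `ξ`, and `φ` is bounded below
by some `m` on the compact circle. The affine function `y ↦ b⟪ξ, y⟫ + (c - b)` equals `c` at `ξ`,
is at most `c` on the circle, and for `b` large it drops below `m` on the circle away from `ξ`.
As `φ = +∞` off the circle, it is an affine minorant of `φ`, so `conv(φ)(ξ) ≥ c`. -/

open Metric
open scoped InnerProductSpace

section UnitSphere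

variable {F : Type*} [NormedAddCommGroup F] [InnerProductSpace ℝ F]

lemma inner_le_one_sub_sq_div_two_of_le_dist {ξ y : F} (hξ : ‖ξ‖ = 1) (hy : ‖y‖ = 1) {ε : ℝ}
    (hε : 0 ≤ ε) (hdist : ε ≤ dist y ξ) : ⟪ξ, y⟫_ℝ ≤ 1 - ε ^ 2 / 2 := by
  have hsq : dist y ξ ^ 2 = 2 - 2 * ⟪ξ, y⟫_ℝ := by
    rw [dist_eq_norm, norm_sub_sq_real, hξ, hy, real_inner_comm]
    ring
  nlinarith [pow_le_pow_left₀ hε hdist 2]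

lemma exists_affineMap_peak_on_sphere {ξ : F} (hξ : ‖ξ‖ = 1) {ε : ℝ} (hε : 0 < ε) (c m : ℝ) :
    ∃ ℓ : F →ᵃ[ℝ] ℝ, ℓ ξ = c ∧
      ∀ y ∈ sphere (0 : F) 1, ℓ y ≤ c ∧ (ε ≤ dist y ξ → ℓ y ≤ m) := by
  set b : ℝ := max 0 (2 * (c - m) / ε ^ 2)
  have hb₀ : 0 ≤ b := le_max_left _ _
  have hb : 2 * (c - m) ≤ b * ε ^ 2 := (div_le_iff₀ (by positivity)).1 (le_max_right _ _)
  refine ⟨(b • innerₛₗ ℝ ξ).toAffineMap + AffineMap.const ℝ F (c - b), by simp [hξ], fun y hy => ?_⟩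
  rw [mem_sphere_zero_iff_norm] at hy
  have hinner : ⟪ξ, y⟫_ℝ ≤ 1 := by simpa [hξ, hy] using real_inner_le_norm ξ y
  simp only [AffineMap.coe_add, LinearMap.coe_toAffineMap, LinearMap.coe_smul, coe_innerₛₗ_apply,
    AffineMap.coe_const, Pi.add_apply, Pi.smul_apply, smul_eq_mul, Function.const_apply]
  refine ⟨by nlinarith, fun hfar => ?_⟩
  nlinarith [inner_le_one_sub_sq_div_two_of_le_dist hξ hy hε.le hfar]

end UnitSphere

lemma IsCompact.exists_forall_coe_le_of_lowerSemicontinuousOn {X : Type*} [TopologicalSpace X]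
    {K : Set X} (hK : IsCompact K) {f : X → EReal} (hf : LowerSemicontinuousOn f K)
    (hbot : ∀ x ∈ K, f x ≠ ⊥) : ∃ m : ℝ, ∀ x ∈ K, (m : EReal) ≤ f x := by
  rcases K.eq_empty_or_nonempty with rfl | hne
  · exact ⟨0, by simp⟩
  obtain ⟨x₀, hx₀, hmin⟩ := hf.exists_isMinOn hne hK
  exact ⟨(f x₀).toReal, fun x hx => (EReal.coe_toReal_le (hbot x₀ hx₀)).trans (hmin hx)⟩

lemma convEnv_le (φ : E2 → EReal) (x : E2) : convEnv φ x ≤ φ x :=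
  iSup₂_le fun _ hℓ => hℓ x

lemma le_convEnv {φ : E2 → EReal} {ℓ : E2 →ᵃ[ℝ] ℝ} (hℓ : ∀ y, (ℓ y : EReal) ≤ φ y) (x : E2) :
    (ℓ x : EReal) ≤ convEnv φ x :=
  le_iSup₂_of_le ℓ hℓ le_rfl

theorem convEnv_eq_on_circle_general
    (φ : E2 → EReal) (hlsc : LowerSemicontinuous φ) (hbot : ∀ x, φ x ≠ ⊥)
    (hsub : {x | φ x ≠ ⊤} ⊆ S1) :
    ∀ ξ ∈ S1, convEnv φ ξ = φ ξ := by
  obtain ⟨m, hm⟩ := (isCompact_sphere (0 : E2) 1).exists_forall_coe_le_of_lowerSemicontinuousOn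
    (hlsc.lowerSemicontinuousOn _) fun x _ => hbot x
  intro ξ hξ
  refine le_antisymm (convEnv_le φ ξ) (EReal.ge_of_forall_gt_iff_ge.1 fun c hc => ?_)
  obtain ⟨ε, hε, hnear⟩ := Metric.eventually_nhds_iff.1 (hlsc ξ c hc)
  obtain ⟨ℓ, hℓξ, hℓ⟩ := exists_affineMap_peak_on_sphere (mem_sphere_zero_iff_norm.1 hξ) hε c m
  rw [← hℓξ]
  refine le_convEnv (fun y => ?_) ξ
  by_cases hy : y ∈ S1
  · obtain ⟨hle_c, hle_m⟩ := hℓ y hy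
    rcases lt_or_ge (dist y ξ) ε with hclose | hfar
    · exact (EReal.coe_le_coe_iff.2 hle_c).trans (hnear hclose).le
    · exact (EReal.coe_le_coe_iff.2 (hle_m hfar)).trans (hm y hy)
  · rw [not_ne_iff.1 fun h => hy (hsub h)]
    exact le_top

/-- if φ is lower semicontinuous, valued in ℝ ∪ {+∞}, with nonempty
finiteness set contained in the unit circle, then its convex envelope agrees with φ
on the unit circle. -/
theorem convEnv_eq_on_circle
    (φ : E2 → EReal) (hlsc : LowerSemicontinuous φ) (hbot : ∀ x, φ x ≠ ⊥)
    (hne : {x | φ x ≠ ⊤}.Nonempty) (hsub : {x | φ x ≠ ⊤} ⊆ S1) :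
    ∀ ξ ∈ S1, convEnv φ ξ = φ ξ :=
  convEnv_eq_on_circle_general φ hlsc hbot hsub

end
end

section
/- Let φ : ℝ² → ℝ ∪ {+∞} be lower semicontinuous, not identically +∞, and with bounded essential domain {x : φ(x) < +∞}. Then the convex hull of the epigraph {(x, z) ∈ ℝ² × ℝ : φ(x) ≤ z} is a closed subset of ℝ³; equivalently, the epigraph of conv(φ) equals the convex hull of the epigraph of φ. -/
open Set MeasureTheory
open scoped Topology ENNReal

noncomputable section

/-- The epigraph of a function ℝ² → ℝ ∪ {+∞}, as a subset of ℝ² × ℝ. -/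
def epigraph (φ : E2 → EReal) : Set (E2 × ℝ) := {p | φ p.1 ≤ ((p.2 : ℝ) : EReal)}

/-!
By Carathéodory, every point of the hull is a convex combination of `finrank + 1` points of the
epigraph. Along a convergent sequence of such combinations the weights, the base points (which
stay in the bounded domain) and the weighted heights `wᵢ (tᵢ - m)` above a lower bound `m` of `φ`
(nonnegative, and summing to the height of the point minus `m`) range over a compact set. In the
limit, terms of positive weight give points of the closed epigraph, while terms whose weight tends
to zero leave only a nonnegative vertical shift, which the epigraph absorbs.

A point outside the closed hull is separated from it by a hyperplane. The hull contains vertical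
rays and is bounded below, so tilting the hyperplane slightly makes it the graph of an affine
minorant of `φ` lying above the point: the hull is the epigraph of `conv(φ)`.
-/

open Module Filter
open scoped Pointwise

theorem exists_fin_finrank_succ_of_mem_convexHull {𝕜 E : Type*} [Field 𝕜] [LinearOrder 𝕜]
    [IsStrictOrderedRing 𝕜] [AddCommGroup E] [Module 𝕜 E] [FiniteDimensional 𝕜 E]
    {s : Set E} {x : E} (hx : x ∈ convexHull 𝕜 s) :
    ∃ (w : Fin (finrank 𝕜 E + 1) → 𝕜) (z : Fin (finrank 𝕜 E + 1) → E),
      (∀ i, 0 ≤ w i) ∧ ∑ i, w i = 1 ∧ (∀ i, z i ∈ s) ∧ ∑ i, w i • z i = x := by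
  obtain ⟨ι, _, z, w, hzs, hai, hw0, hw1, hwz⟩ := eq_pos_convex_span_of_mem_convexHull hx
  have hcard : Fintype.card ι ≤ Fintype.card (Fin (finrank 𝕜 E + 1)) := by
    simpa using hai.card_le_finrank_succ.trans (by gcongr; exact Submodule.finrank_le _)
  obtain ⟨e⟩ := Function.Embedding.nonempty_of_card_le hcard
  obtain ⟨i₀⟩ : Nonempty ι := by
    by_contra h
    simp [not_nonempty_iff.1 h] at hw1
  -- pad the combination with zero weights on the indices outside the range of `e`
  have hext : ∀ k ∉ range e, Function.extend e w 0 k = 0 := fun k hk =>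
    Function.extend_apply' _ _ _ fun ⟨i, hi⟩ => hk ⟨i, hi⟩
  refine ⟨Function.extend e w 0, Function.extend e z fun _ => z i₀, fun k => ?_, ?_, fun k => ?_, ?_⟩
  · by_cases hk : k ∈ range e
    · obtain ⟨i, rfl⟩ := hk
      simpa [e.injective.extend_apply] using (hw0 i).le
    · simp [hext k hk]
  · rw [← hw1]
    exact (Fintype.sum_of_injective e e.injective _ _ hext
      fun i => (e.injective.extend_apply _ _ i).symm).symm
  · by_cases hk : k ∈ range e
    · obtain ⟨i, rfl⟩ := hk
      simpa [e.injective.extend_apply] using hzs ⟨i, rfl⟩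
    · simpa [Function.extend_apply' _ _ _ fun ⟨i, hi⟩ => hk ⟨i, hi⟩] using hzs ⟨i₀, rfl⟩
  · rw [← hwz]
    exact (Fintype.sum_of_injective e e.injective _ _ (fun k hk => by simp [hext k hk])
      fun i => by simp [e.injective.extend_apply]).symm

theorem convexHull_add_subset_of_add_subset {𝕜 E : Type*} [Field 𝕜] [LinearOrder 𝕜]
    [IsStrictOrderedRing 𝕜] [AddCommGroup E] [Module 𝕜 E] {s K : Set E} (hK : Convex 𝕜 K)
    (h : s + K ⊆ s) : convexHull 𝕜 s + K ⊆ convexHull 𝕜 s :=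
  calc convexHull 𝕜 s + K = convexHull 𝕜 (s + K) := by rw [convexHull_add, hK.convexHull_eq]
    _ ⊆ convexHull 𝕜 s := convexHull_mono h

def verticalRay (E : Type*) [Zero E] : Set (E × ℝ) := ({0} : Set E) ×ˢ Ici 0

theorem convex_verticalRay (E : Type*) [AddCommGroup E] [Module ℝ E] :
    Convex ℝ (verticalRay E) :=
  (convex_singleton 0).prod (convex_Ici 0)

theorem mk_add_div_mem_of_tendsto {α E : Type*} [TopologicalSpace E] {S : Set (E × ℝ)} {m : ℝ}
    {l : Filter α} [l.NeBot] (hS : IsClosed S)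
    {w : α → ℝ} {z : α → E × ℝ} (hz : ∀ a, z a ∈ S) {W D : ℝ} {Y : E}
    (hw : Tendsto w l (𝓝 W)) (hW : W ≠ 0) (hY : Tendsto (fun a => (z a).1) l (𝓝 Y))
    (hD : Tendsto (fun a => w a * ((z a).2 - m)) l (𝓝 D)) : (Y, m + D / W) ∈ S := by
  have ht : Tendsto (fun a => (z a).2) l (𝓝 (m + D / W)) := by
    refine ((hD.div hw hW).const_add m).congr' ?_
    filter_upwards [hw.eventually_ne hW] with a ha
    show m + w a * ((z a).2 - m) / w a = (z a).2
    rw [mul_div_cancel_left₀ _ ha]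
    ring
  exact hS.mem_of_tendsto (hY.prodMk_nhds ht) (Eventually.of_forall hz)

theorem mk_sum_smul_mem_convexHull {ι E : Type*} [Fintype ι] [AddCommGroup E] [Module ℝ E]
    {S : Set (E × ℝ)} {m : ℝ} (hup : S + verticalRay E ⊆ S)
    {W : ι → ℝ} {Y : ι → E} {D : ι → ℝ} (hW0 : ∀ i, 0 ≤ W i) (hW1 : ∑ i, W i = 1)
    (hD : ∀ i, 0 ≤ D i) (hS : ∀ i, W i ≠ 0 → (Y i, m + D i / W i) ∈ S) :
    (∑ i, W i • Y i, m + ∑ i, D i) ∈ convexHull ℝ S := by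
  have hcomb : ∑ i, W i • (Y i, m + D i / W i) ∈ convexHull ℝ S := by
    have := (convex_convexHull ℝ S).finsum_mem hW0 (by rwa [finsum_eq_sum_of_fintype])
      fun i hi => subset_convexHull ℝ S (hS i hi)
    rwa [finsum_eq_sum_of_fintype] at this
  -- the terms with `W i = 0` contribute only the vertical excess `D i`
  have hexcess : 0 ≤ ∑ i, (D i - W i * (D i / W i)) := by
    refine Finset.sum_nonneg fun i _ => ?_
    rcases eq_or_ne (W i) 0 with h | h
    · simpa [h] using hD i
    · simp [mul_div_cancel₀ _ h]
  have hsplit : (∑ i, W i • Y i, m + ∑ i, D i)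
      = ∑ i, W i • (Y i, m + D i / W i) + (0, ∑ i, (D i - W i * (D i / W i))) := by
    ext
    · simp [Prod.fst_sum]
    · simp [Prod.snd_sum, mul_add, Finset.sum_add_distrib, ← Finset.sum_mul, hW1,
        Finset.sum_sub_distrib]
  rw [hsplit]
  exact convexHull_add_subset_of_add_subset (convex_verticalRay E) hup
    (Set.add_mem_add hcomb ⟨rfl, hexcess⟩)

theorem isClosed_convexHull_of_isBounded_fst {E : Type*} [NormedAddCommGroup E]
    [NormedSpace ℝ E] [FiniteDimensional ℝ E] {S : Set (E × ℝ)} {m : ℝ} (hS : IsClosed S)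
    (hup : S + verticalRay E ⊆ S) (hbdd : Bornology.IsBounded (Prod.fst '' S))
    (hlow : ∀ q ∈ S, m ≤ q.2) : IsClosed (convexHull ℝ S) := by
  rw [← isSeqClosed_iff_isClosed]
  intro q p hq hqp
  choose w z hw0 hw1 hzS hwz using fun n => exists_fin_finrank_succ_of_mem_convexHull (hq n)
  obtain ⟨B, hB⟩ := hqp.snd_nhds.bddAbove_range
  -- Carathéodory data of `q n`: weights, base points and weighted heights above `m`
  let data : ℕ → Fin (finrank ℝ (E × ℝ) + 1) → ℝ × E × ℝ :=
    fun n i => (w n i, (z n i).1, w n i * ((z n i).2 - m))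
  let Φ : (Fin (finrank ℝ (E × ℝ) + 1) → ℝ × E × ℝ) → ℝ × E × ℝ :=
    fun ω => (∑ i, (ω i).1, ∑ i, (ω i).1 • (ω i).2.1, ∑ i, (ω i).2.2)
  have hΦ : ∀ n, Φ (data n) = (1, (q n).1, (q n).2 - m) := by
    intro n
    have h1 := congrArg Prod.fst (hwz n)
    have h2 := congrArg Prod.snd (hwz n)
    simp only [Prod.fst_sum, Prod.snd_sum, Prod.smul_fst, Prod.smul_snd, smul_eq_mul] at h1 h2
    simp only [Φ, data, hw1, h1, mul_sub, Finset.sum_sub_distrib, ← Finset.sum_mul, h2, one_mul]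
  have hdata : ∀ n, data n ∈ univ.pi fun _ => Icc 0 1 ×ˢ closure (Prod.fst '' S) ×ˢ Icc 0 (B - m) := by
    intro n i _
    have hd : ∀ j, 0 ≤ w n j * ((z n j).2 - m) := fun j =>
      mul_nonneg (hw0 n j) (sub_nonneg.2 (hlow _ (hzS n j)))
    refine ⟨⟨hw0 n i, hw1 n ▸ Finset.single_le_sum (fun j _ => hw0 n j) (Finset.mem_univ i)⟩,
      subset_closure ⟨z n i, hzS n i, rfl⟩, hd i, ?_⟩
    calc w n i * ((z n i).2 - m) ≤ ∑ j, w n j * ((z n j).2 - m) :=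
          Finset.single_le_sum (fun j _ => hd j) (Finset.mem_univ i)
      _ = (q n).2 - m := congrArg (fun v => v.2.2) (hΦ n)
      _ ≤ B - m := by linarith [hB ⟨n, rfl⟩]
  obtain ⟨ω, hω, σ, hσ, hlim⟩ := (isCompact_univ_pi fun _ =>
    isCompact_Icc.prod (hbdd.isCompact_closure.prod isCompact_Icc)).tendsto_subseq hdata
  have hΦω : Φ ω = (1, p.1, p.2 - m) := by
    refine tendsto_nhds_unique ((Continuous.tendsto (by fun_prop) ω).comp hlim) ?_
    simp only [Function.comp_def, hΦ]
    have hqσ := hqp.comp hσ.tendsto_atTop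
    exact tendsto_const_nhds.prodMk_nhds (hqσ.fst_nhds.prodMk_nhds (hqσ.snd_nhds.sub_const m))
  simp only [Φ, Prod.mk.injEq] at hΦω
  obtain ⟨hW1, hY, hD⟩ := hΦω
  have hmem := mk_sum_smul_mem_convexHull hup (m := m) (fun i => (hω i trivial).1.1) hW1
    (fun i => (hω i trivial).2.2.1) fun i hi =>
      mk_add_div_mem_of_tendsto hS (fun n => hzS (σ n) i) (tendsto_pi_nhds.1 hlim i).fst_nhds hi
        (tendsto_pi_nhds.1 hlim i).snd_nhds.fst_nhds (tendsto_pi_nhds.1 hlim i).snd_nhds.snd_nhds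
  rwa [hY, hD, add_sub_cancel] at hmem

theorem exists_affineMap_lt_of_strict_separation {E : Type*} [AddCommGroup E] [Module ℝ E]
    {C : Set (E × ℝ)} {p : E × ℝ} (g : E →ₗ[ℝ] ℝ) {b u : ℝ} (hb : b < 0)
    (hC : ∀ q ∈ C, g q.1 + b * q.2 < u) (hp : u < g p.1 + b * p.2) :
    ∃ ℓ : E →ᵃ[ℝ] ℝ, (∀ q ∈ C, ℓ q.1 < q.2) ∧ p.2 < ℓ p.1 := by
  have hℓ : ∀ x, (b⁻¹ • (AffineMap.const ℝ E u - g.toAffineMap)) x = (u - g x) / b := by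
    intro x
    simp [inv_mul_eq_div]
  refine ⟨b⁻¹ • (AffineMap.const ℝ E u - g.toAffineMap), fun q hq => ?_, ?_⟩
  · rw [hℓ, div_lt_iff_of_neg hb]
    linarith [hC q hq]
  · rw [hℓ, lt_div_iff_of_neg hb]
    linarith

theorem exists_affineMap_lt_of_notMem_convexHull {E : Type*} [NormedAddCommGroup E]
    [NormedSpace ℝ E] {S : Set (E × ℝ)} {m : ℝ} {p : E × ℝ} (hne : S.Nonempty)
    (hup : S + verticalRay E ⊆ S) (hlow : ∀ q ∈ S, m ≤ q.2) (hclosed : IsClosed (convexHull ℝ S))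
    (hp : p ∉ convexHull ℝ S) : ∃ ℓ : E →ᵃ[ℝ] ℝ, (∀ q ∈ S, ℓ q.1 < q.2) ∧ p.2 < ℓ p.1 := by
  obtain ⟨f, u, hfS, hfp⟩ := geometric_hahn_banach_closed_point (convex_convexHull ℝ S) hclosed hp
  replace hfS : ∀ q ∈ S, f q < u := fun q hq => hfS q (subset_convexHull ℝ S hq)
  set g : E →L[ℝ] ℝ := f.comp (ContinuousLinearMap.inl ℝ E ℝ)
  set β := f (0, 1)
  have hf : ∀ q : E × ℝ, f q = g q.1 + β * q.2 := by
    intro q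
    calc f q = f ((q.1, 0) + q.2 • ((0 : E), (1 : ℝ))) := by congr 1; ext <;> simp
      _ = g q.1 + β * q.2 := by rw [map_add, map_smul, smul_eq_mul, mul_comm]; rfl
  -- `S` contains vertical rays, along which `f` stays below `u`
  have hβ : β ≤ 0 := by
    obtain ⟨q, hq⟩ := hne
    by_contra! hβ
    have hs : ((0 : E), (u - f q) / β) ∈ verticalRay E :=
      ⟨rfl, div_nonneg (sub_nonneg.2 (hfS q hq).le) hβ.le⟩
    have := hfS _ (hup (Set.add_mem_add hq hs))
    rw [map_add, hf (0, _), mul_div_cancel₀ _ hβ.ne'] at this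
    simp at this
  -- tilting the separating hyperplane by `ε` makes it non-vertical; `m` bounds the error on `S`
  obtain ⟨ε, hε, hεp⟩ := exists_pos_mul_lt (sub_pos.2 hfp) (p.2 - m)
  refine exists_affineMap_lt_of_strict_separation (g : E →ₗ[ℝ] ℝ) (b := β - ε) (u := u - ε * m)
    (by linarith) (fun q hq => ?_) ?_
  · have h1 := hfS q hq
    have h2 := hlow q hq
    rw [hf] at h1
    simp only [ContinuousLinearMap.coe_coe]
    nlinarith
  · rw [hf] at hfp hεp
    simp only [ContinuousLinearMap.coe_coe]
    nlinarith

theorem convexHull_eq_setOf_forall_affineMap_le {E : Type*} [NormedAddCommGroup E]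
    [NormedSpace ℝ E] {S : Set (E × ℝ)} {m : ℝ} (hne : S.Nonempty)
    (hup : S + verticalRay E ⊆ S) (hlow : ∀ q ∈ S, m ≤ q.2) (hclosed : IsClosed (convexHull ℝ S)) :
    convexHull ℝ S = {p | ∀ ℓ : E →ᵃ[ℝ] ℝ, (∀ q ∈ S, ℓ q.1 ≤ q.2) → ℓ p.1 ≤ p.2} := by
  ext p
  refine ⟨fun hp ℓ hℓ => ?_, fun hp => ?_⟩
  · let A : E × ℝ →ᵃ[ℝ] ℝ := AffineMap.snd - ℓ.comp AffineMap.fst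
    have hset : {q : E × ℝ | ℓ q.1 ≤ q.2} = A ⁻¹' Ici 0 := by
      ext q
      simp [A]
    have hconv : Convex ℝ {q : E × ℝ | ℓ q.1 ≤ q.2} := hset ▸ (convex_Ici 0).affine_preimage A
    exact convexHull_min hℓ hconv hp
  · by_contra hpS
    obtain ⟨ℓ, hℓS, hℓp⟩ := exists_affineMap_lt_of_notMem_convexHull hne hup hlow hclosed hpS
    exact hℓp.not_ge (hp ℓ fun q hq => (hℓS q hq).le)

theorem exists_forall_coe_le_of_isBounded {E : Type*} [PseudoMetricSpace E] [ProperSpace E]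
    {φ : E → EReal} (hlsc : LowerSemicontinuous φ) (hbot : ∀ x, φ x ≠ ⊥) (hne : ∃ x, φ x ≠ ⊤)
    (hbdd : Bornology.IsBounded {x | φ x ≠ ⊤}) : ∃ m : ℝ, ∀ x, (m : EReal) ≤ φ x := by
  obtain ⟨x₀, hx₀⟩ := hne
  obtain ⟨a, -, ha⟩ := (hlsc.lowerSemicontinuousOn _).exists_isMinOn ⟨x₀, subset_closure hx₀⟩
    hbdd.isCompact_closure
  obtain ⟨m, -, hm⟩ := EReal.lt_iff_exists_real_btwn.1 (hbot a).bot_lt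
  refine ⟨m, fun x => ?_⟩
  by_cases hx : φ x = ⊤
  · simp [hx]
  · exact hm.le.trans (ha (subset_closure hx))

theorem isClosed_epigraph {φ : E2 → EReal} (hlsc : LowerSemicontinuous φ) :
    IsClosed (epigraph φ) :=
  hlsc.isClosed_epigraph.preimage
    (continuous_fst.prodMk (continuous_coe_real_ereal.comp continuous_snd))

theorem epigraph_add_verticalRay_subset (φ : E2 → EReal) :
    epigraph φ + verticalRay E2 ⊆ epigraph φ := by
  rintro _ ⟨q, hq, r, ⟨hr₁, hr₂⟩, rfl⟩
  simp only [mem_singleton_iff, mem_Ici] at hr₁ hr₂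
  change φ (q.1 + r.1) ≤ ((q.2 + r.2 : ℝ) : EReal)
  rw [hr₁, add_zero]
  exact hq.trans (EReal.coe_le_coe_iff.2 (le_add_of_nonneg_right hr₂))

theorem fst_image_epigraph_subset (φ : E2 → EReal) :
    Prod.fst '' epigraph φ ⊆ {x | φ x ≠ ⊤} := by
  rintro _ ⟨q, hq, rfl⟩
  exact ne_top_of_le_ne_top (EReal.coe_ne_top _) hq

theorem epigraph_nonempty {φ : E2 → EReal} (hne : ∃ x, φ x ≠ ⊤) : (epigraph φ).Nonempty :=
  let ⟨x, hx⟩ := hne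
  ⟨(x, (φ x).toReal), EReal.le_coe_toReal hx⟩

theorem epigraph_convEnv (φ : E2 → EReal) :
    epigraph (convEnv φ) =
      {p | ∀ ℓ : E2 →ᵃ[ℝ] ℝ, (∀ q ∈ epigraph φ, ℓ q.1 ≤ q.2) → ℓ p.1 ≤ p.2} := by
  ext p
  simp only [epigraph, convEnv, mem_ofPred_eq, iSup₂_le_iff, EReal.coe_le_coe_iff]
  refine forall_congr' fun ℓ => imp_congr_left ⟨fun h q hq => ?_, fun h y => ?_⟩
  · exact EReal.coe_le_coe_iff.1 ((h q.1).trans hq)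
  · exact EReal.le_of_forall_lt_iff_le.1 fun t ht => EReal.coe_le_coe_iff.2 (h (y, t) ht.le)

/-- for φ lower semicontinuous, not identically +∞ and with bounded
essential domain, the convex hull of the epigraph of φ is closed; equivalently it
equals the epigraph of the convex envelope conv(φ). -/
theorem convexHull_epigraph_closed
    (φ : E2 → EReal) (hlsc : LowerSemicontinuous φ) (hbot : ∀ x, φ x ≠ ⊥)
    (hne : ∃ x, φ x ≠ ⊤) (hbdd : Bornology.IsBounded {x | φ x ≠ ⊤}) :
    IsClosed (convexHull ℝ (epigraph φ)) ∧
    epigraph (convEnv φ) = convexHull ℝ (epigraph φ) := by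
  obtain ⟨m, hm⟩ := exists_forall_coe_le_of_isBounded hlsc hbot hne hbdd
  have hlow : ∀ q ∈ epigraph φ, m ≤ q.2 := fun q hq =>
    EReal.coe_le_coe_iff.1 ((hm q.1).trans hq)
  have hclosed : IsClosed (convexHull ℝ (epigraph φ)) :=
    isClosed_convexHull_of_isBounded_fst (isClosed_epigraph hlsc)
      (epigraph_add_verticalRay_subset φ) (hbdd.subset (fst_image_epigraph_subset φ)) hlow
  refine ⟨hclosed, ?_⟩
  rw [epigraph_convEnv, convexHull_eq_setOf_forall_affineMap_le (epigraph_nonempty hne)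
    (epigraph_add_verticalRay_subset φ) hlow hclosed]

end
end

section
/- Let f : ℝ² → ℝ be C¹ with ‖∇f(x)‖ < 1 for every x ∈ ℝ² (so that its graph Σ = {(x, f(x)) : x ∈ ℝ²} ⊂ ℝ³ is an entire spacelike surface in Minkowski 3-space). Define the domain of dependence D_Σ = {p ∈ ℝ³ : for every 1-Lipschitz curve c : ℝ → ℝ² with c(p₃) = (p₁, p₂), there exists t ∈ ℝ with f(c(t)) = t}. Then D_Σ is open, and D_Σ equals the intersection of all open null half-spaces containing Σ, where an open null half-space is a set of the form {x ∈ ℝ³ : x₁ξ₁ + x₂ξ₂ − x₃ < c} or {x ∈ ℝ³ : x₁ξ₁ + x₂ξ₂ − x₃ > c} with ξ ∈ S¹, c ∈ ℝ (the intersection over an empty family being ℝ³). -/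
open Set MeasureTheory
open scoped Topology ENNReal

noncomputable section

/-- Minkowski 3-space ℝ^{2,1}, identified with ℝ² × ℝ. -/
abbrev M3 := E2 × ℝ

/-!
For a unit vector `ξ`, the quantity `⟪x.1, ξ⟫ - x.2` is constant along the null lines of
direction `(ξ, 1)`. On the graph it becomes `y ↦ ⟪y, ξ⟫ - f y`, which has no critical point since
`‖∇f‖ < 1`, so it attains neither its supremum nor its infimum. Hence both `D_Σ` and the
intersection of the null half-spaces containing `Σ` equal the set of points `p` at which, for
every `ξ`, this function takes values strictly on both sides of its value at `p`; by compactness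
of `S¹` that set is open.

The nontrivial inclusion: a 1-Lipschitz curve `c` through `(c s, s)` missing `Σ` stays, say,
below it. Along times `t → ∞` the directions of `c t - c s` accumulate at some `ξ ∈ S¹`, and
`f y ≥ t - ‖c t - y‖` together with `‖c t - c s‖ ≤ t - s` shows in the limit that `Σ` lies
below the null plane through `(c s, s)` with direction `ξ`.
-/

open Filter Metric
open scoped InnerProductSpace

theorem IsCompact.isOpen_setOf_forall {X Y : Type*} [TopologicalSpace X] [TopologicalSpace Y]
    {K : Set Y} (hK : IsCompact K) {P : X → Y → Prop}
    (hP : IsOpen {z : X × Y | P z.1 z.2}) : IsOpen {x | ∀ y ∈ K, P x y} :=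
  isOpen_iff_eventually.2 fun _ hx =>
    hK.eventually_forall_of_forall_eventually fun y hy => hP.mem_nhds (hx y hy)

variable {E : Type*} [NormedAddCommGroup E] [InnerProductSpace ℝ E]

theorem norm_mul_norm_sub_le (u w : E) : ‖u‖ * ‖u - w‖ ≤ ‖u‖ ^ 2 - ⟪u, w⟫_ℝ + ‖w‖ ^ 2 := by
  have hsq : ‖u - w‖ ^ 2 = ‖u‖ ^ 2 - 2 * ⟪u, w⟫_ℝ + ‖w‖ ^ 2 := norm_sub_sq_real u w
  have hcs : ⟪u, w⟫_ℝ ≤ ‖u‖ * ‖w‖ := real_inner_le_norm u w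
  have hrhs : 0 ≤ ‖u‖ ^ 2 - ⟪u, w⟫_ℝ + ‖w‖ ^ 2 := by nlinarith [sq_nonneg (‖u‖ - ‖w‖)]
  rw [← pow_le_pow_iff_left₀ (by positivity) hrhs two_ne_zero, mul_pow, hsq]
  -- the difference of the two sides is `(⟪u, w⟫ - ‖w‖²)² + ‖u‖²‖w‖²`
  nlinarith [sq_nonneg (⟪u, w⟫_ℝ - ‖w‖ ^ 2), sq_nonneg (‖u‖ * ‖w‖)]

variable {f : E → ℝ} {ξ : E}

theorem not_isLocalExtr_inner_sub (hf : Differentiable ℝ f) (hgrad : ∀ x, ‖fderiv ℝ f x‖ < 1)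
    (hξ : ‖ξ‖ = 1) (y : E) : ¬IsLocalExtr (fun y => ⟪y, ξ⟫_ℝ - f y) y := by
  intro hext
  have hinner : HasFDerivAt (fun y => ⟪y, ξ⟫_ℝ) (innerSL ℝ ξ) y := by
    convert (innerSL ℝ ξ).hasFDerivAt using 1
    ext z
    exact real_inner_comm ξ z
  have hzero := hext.hasFDerivAt_eq_zero (hinner.sub (hf y).hasFDerivAt)
  have hlt := hgrad y
  rw [← sub_eq_zero.1 hzero, innerSL_apply_norm, hξ] at hlt
  exact lt_irrefl _ hlt

theorem inner_sub_lt_of_forall_le (hf : Differentiable ℝ f) (hgrad : ∀ x, ‖fderiv ℝ f x‖ < 1)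
    (hξ : ‖ξ‖ = 1) {a : ℝ} (h : ∀ y, ⟪y, ξ⟫_ℝ - f y ≤ a) (y : E) :
    ⟪y, ξ⟫_ℝ - f y < a :=
  (h y).lt_of_ne fun heq => not_isLocalExtr_inner_sub hf hgrad hξ y <|
    Or.inr <| Eventually.of_forall fun y' => (h y').trans_eq heq.symm

theorem lt_inner_sub_of_forall_le (hf : Differentiable ℝ f) (hgrad : ∀ x, ‖fderiv ℝ f x‖ < 1)
    (hξ : ‖ξ‖ = 1) {a : ℝ} (h : ∀ y, a ≤ ⟪y, ξ⟫_ℝ - f y) (y : E) :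
    a < ⟪y, ξ⟫_ℝ - f y :=
  (h y).lt_of_ne' fun heq => not_isLocalExtr_inner_sub hf hgrad hξ y <|
    Or.inl <| Eventually.of_forall fun y' => heq.trans_le (h y')

def domainOfDependence (f : E → ℝ) : Set (E × ℝ) :=
  {p | ∀ c : ℝ → E, LipschitzWith 1 c → c p.2 = p.1 → ∃ t, f (c t) = t}

def nullCrossingSet (f : E → ℝ) : Set (E × ℝ) :=
  {p | ∀ ξ ∈ sphere (0 : E) 1,
    (∃ y, ⟪y, ξ⟫_ℝ - f y < ⟪p.1, ξ⟫_ℝ - p.2) ∧ ∃ y, ⟪p.1, ξ⟫_ℝ - p.2 < ⟪y, ξ⟫_ℝ - f y}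

theorem isOpen_nullCrossingSet [ProperSpace E] (f : E → ℝ) : IsOpen (nullCrossingSet f) := by
  refine (isCompact_sphere (0 : E) 1).isOpen_setOf_forall ?_
  simp only [ofPred_and, ofPred_exists]
  exact (isOpen_iUnion fun y => isOpen_lt (by fun_prop) (by fun_prop)).inter
    (isOpen_iUnion fun y => isOpen_lt (by fun_prop) (by fun_prop))

theorem sInter_nullHalfspaces_eq (hf : Differentiable ℝ f) (hgrad : ∀ x, ‖fderiv ℝ f x‖ < 1) :
    ⋂₀ {H : Set (E × ℝ) | (∃ ξ ∈ sphere (0 : E) 1, ∃ cc : ℝ,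
        H = {x | ⟪x.1, ξ⟫_ℝ - x.2 < cc} ∨ H = {x | cc < ⟪x.1, ξ⟫_ℝ - x.2}) ∧
      {p | p.2 = f p.1} ⊆ H} = nullCrossingSet f := by
  ext p
  simp only [mem_sInter]
  constructor
  · intro hp ξ hξ
    have hξ' := mem_sphere_zero_iff_norm.1 hξ
    constructor
    · by_contra! hle
      refine lt_irrefl (⟪p.1, ξ⟫_ℝ - p.2) (hp _ ⟨⟨ξ, hξ, _, Or.inr rfl⟩, ?_⟩)
      intro x (hx : x.2 = f x.1)
      simpa only [mem_ofPred_eq, hx] using lt_inner_sub_of_forall_le hf hgrad hξ' hle x.1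
    · by_contra! hle
      refine lt_irrefl (⟪p.1, ξ⟫_ℝ - p.2) (hp _ ⟨⟨ξ, hξ, _, Or.inl rfl⟩, ?_⟩)
      intro x (hx : x.2 = f x.1)
      simpa only [mem_ofPred_eq, hx] using inner_sub_lt_of_forall_le hf hgrad hξ' hle x.1
  · rintro hp H ⟨⟨ξ, hξ, cc, rfl | rfl⟩, hgraph⟩
    · obtain ⟨y, hy⟩ := (hp ξ hξ).2
      exact hy.trans (hgraph (show (y, f y) ∈ {p : E × ℝ | p.2 = f p.1} from rfl))
    · obtain ⟨y, hy⟩ := (hp ξ hξ).1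
      exact (hgraph (show (y, f y) ∈ {p : E × ℝ | p.2 = f p.1} from rfl)).trans hy

theorem exists_inner_sub_eq_of_mem_domainOfDependence {p : E × ℝ} (hp : p ∈ domainOfDependence f)
    {ξ : E} (hξ : ‖ξ‖ = 1) : ∃ y, ⟪y, ξ⟫_ℝ - f y = ⟪p.1, ξ⟫_ℝ - p.2 := by
  have hline : LipschitzWith 1 fun t : ℝ => p.1 + (t - p.2) • ξ :=
    LipschitzWith.of_dist_le_mul fun a b => by
      rw [dist_eq_norm, add_sub_add_left_eq_sub, ← sub_smul, sub_sub_sub_cancel_right, norm_smul,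
        hξ, mul_one, NNReal.coe_one, one_mul, Real.dist_eq, Real.norm_eq_abs]
  obtain ⟨t, ht⟩ := hp _ hline (by simp)
  refine ⟨p.1 + (t - p.2) • ξ, ?_⟩
  rw [ht, inner_add_left, real_inner_smul_left, real_inner_self_eq_norm_sq, hξ]
  ring

theorem domainOfDependence_subset_nullCrossingSet (hf : Differentiable ℝ f)
    (hgrad : ∀ x, ‖fderiv ℝ f x‖ < 1) :
    domainOfDependence f ⊆ nullCrossingSet f := by
  intro p hp ξ hξ
  have hξ' := mem_sphere_zero_iff_norm.1 hξ
  obtain ⟨y₀, hy₀⟩ := exists_inner_sub_eq_of_mem_domainOfDependence hp hξ'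
  constructor
  · by_contra! hle
    exact (lt_inner_sub_of_forall_le hf hgrad hξ' hle y₀).ne' hy₀
  · by_contra! hle
    exact (inner_sub_lt_of_forall_le hf hgrad hξ' hle y₀).ne hy₀

theorem exists_inner_sub_le_of_forall_lt [ProperSpace E] {F : E → ℝ} (hF : LipschitzWith 1 F)
    {c : ℝ → E} (hc : LipschitzWith 1 c) {s : ℝ} (hlt : ∀ t, s ≤ t → t < F (c t)) :
    ∃ ξ ∈ sphere (0 : E) 1, ∀ y, ⟪y, ξ⟫_ℝ - F y ≤ ⟪c s, ξ⟫_ℝ - s := by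
  have hFle : ∀ a b, F a ≤ F b + ‖a - b‖ := fun a b => by
    simpa [dist_eq_norm] using hF.le_add_mul a b
  set T : ℕ → ℝ := fun n => F (c s) + n
  set u : ℕ → E := fun n => c (T n) - c s
  have hsT : ∀ n, s ≤ T n := fun n => by
    linarith [hlt s le_rfl, (Nat.cast_nonneg n : (0 : ℝ) ≤ n)]
  have hu_lower : ∀ n : ℕ, (n : ℝ) < ‖u n‖ := fun n => by
    linarith [hlt (T n) (hsT n), hFle (c (T n)) (c s)]
  have hu_upper : ∀ n, ‖u n‖ ≤ T n - s := fun n => by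
    simpa [dist_eq_norm, Real.dist_eq, abs_of_nonneg (sub_nonneg.2 (hsT n))] using
      hc.dist_le_mul (T n) s
  have hu_pos : ∀ n, 0 < ‖u n‖ := fun n => (Nat.cast_nonneg n).trans_lt (hu_lower n)
  obtain ⟨ξ, hξ, φ, hφ, hlim⟩ := (isCompact_sphere (0 : E) 1).tendsto_subseq
    (x := fun n => ‖u n‖⁻¹ • u n) fun n => by
      simp [norm_smul, (hu_pos n).ne']
  refine ⟨ξ, hξ, fun y => ?_⟩
  set w := y - c s
  have hbound : ∀ n, s + (⟪‖u n‖⁻¹ • u n, w⟫_ℝ - ‖w‖ ^ 2 / ‖u n‖) ≤ F y := fun n => by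
    have hnear : T n < F y + ‖u n - w‖ := by
      have := hFle (c (T n)) y
      rw [show c (T n) - y = u n - w by simp only [u, w]; abel] at this
      linarith [hlt (T n) (hsT n)]
    have hdiv : ⟪‖u n‖⁻¹ • u n, w⟫_ℝ - ‖w‖ ^ 2 / ‖u n‖ ≤ ‖u n‖ - ‖u n - w‖ := by
      rw [real_inner_smul_left, inv_mul_eq_div, ← sub_div, div_le_iff₀ (hu_pos n)]
      nlinarith [norm_mul_norm_sub_le (u n) w]
    linarith [hu_upper n]
  have hu_top : Tendsto (fun n => ‖u (φ n)‖) atTop atTop :=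
    tendsto_atTop_mono (fun n => (hu_lower (φ n)).le)
      (tendsto_natCast_atTop_atTop.comp hφ.tendsto_atTop)
  have hlim' : Tendsto (fun n => s + (⟪‖u (φ n)‖⁻¹ • u (φ n), w⟫_ℝ - ‖w‖ ^ 2 / ‖u (φ n)‖))
      atTop (𝓝 (s + (⟪ξ, w⟫_ℝ - 0))) :=
    tendsto_const_nhds.add ((hlim.inner tendsto_const_nhds).sub
      (tendsto_const_nhds.div_atTop hu_top))
  have := le_of_tendsto' hlim' fun n => hbound (φ n)
  rw [inner_sub_right, real_inner_comm y, real_inner_comm (c s)] at this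
  linarith

theorem nullCrossingSet_subset_domainOfDependence [ProperSpace E] (hf : LipschitzWith 1 f) :
    nullCrossingSet f ⊆ domainOfDependence f := by
  intro p hp c hc hcp
  have h_not_above : ∃ a, a ≤ f (c a) := by
    by_contra! habove
    -- reversing time turns a curve above the graph of `f` into one below the graph of `-f`
    obtain ⟨ξ, hξ, hle⟩ := exists_inner_sub_le_of_forall_lt (F := fun y => -f y) hf.neg
      (c := fun t => c (-t)) (by simpa [Function.comp_def] using hc.comp LipschitzWith.id.neg)
      (s := -p.2) fun t _ => by linarith [habove (-t)]
    obtain ⟨y, hy⟩ := (hp (-ξ) (by simpa using hξ)).1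
    have := hle y
    simp only [neg_neg, hcp, inner_neg_right] at this hy
    linarith
  have h_not_below : ∃ b, f (c b) ≤ b := by
    by_contra! hbelow
    obtain ⟨ξ, hξ, hle⟩ := exists_inner_sub_le_of_forall_lt hf hc fun t _ => hbelow t
    obtain ⟨y, hy⟩ := (hp ξ hξ).2
    rw [hcp] at hle
    linarith [hle y]
  obtain ⟨a, ha⟩ := h_not_above
  obtain ⟨b, hb⟩ := h_not_below
  obtain ⟨t, ht⟩ :=
    intermediate_value_univ₂ continuous_id (hf.continuous.comp hc.continuous) ha hb
  exact ⟨t, ht.symm⟩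

/-- the domain of dependence of an entire spacelike graph is open
and equals the intersection of all open null half-spaces containing the graph
(the empty intersection being all of ℝ³). -/
theorem domain_of_dependence_eq_inter_null_halfspaces
    (f : E2 → ℝ) (hf : ContDiff ℝ 1 f) (hgrad : ∀ x : E2, ‖fderiv ℝ f x‖ < 1)
    (Sig : Set M3) (hSig : Sig = {p : M3 | p.2 = f p.1})
    (DD : Set M3)
    (hDD : DD = {p : M3 | ∀ c : ℝ → E2, LipschitzWith 1 c → c p.2 = p.1 →
      ∃ t : ℝ, f (c t) = t}) :
    IsOpen DD ∧
    DD = ⋂₀ {H : Set M3 | (∃ ξ ∈ S1, ∃ cc : ℝ,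
        H = {x : M3 | (inner ℝ x.1 ξ : ℝ) - x.2 < cc} ∨
        H = {x : M3 | cc < (inner ℝ x.1 ξ : ℝ) - x.2}) ∧ Sig ⊆ H} := by
  subst hSig hDD
  have hdiff : Differentiable ℝ f := hf.differentiable one_ne_zero
  have hlip : LipschitzWith 1 f :=
    lipschitzWith_of_nnnorm_fderiv_le hdiff fun x => by exact_mod_cast (hgrad x).le
  have hD : domainOfDependence f = nullCrossingSet f :=
    (domainOfDependence_subset_nullCrossingSet hdiff hgrad).antisymm
      (nullCrossingSet_subset_domainOfDependence hlip)
  change IsOpen (domainOfDependence f) ∧ domainOfDependence f = _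
  rw [hD]
  exact ⟨isOpen_nullCrossingSet f, (sInter_nullHalfspaces_eq hdiff hgrad).symm⟩
end
end

section
/- Let γ : [0, ∞) → ℝ² be a differentiable curve, and suppose there are differentiable maps T, N : [0, ∞) → ℝ² and continuous functions ν, κ : [0, ∞) → (0, ∞) such that, with respect to the bilinear form q(v, w) = v₁w₁ − v₂w₂ on ℝ²: q(T(r), T(r)) = 1, q(N(r), N(r)) = −1 and q(T(r), N(r)) = 0 for all r; γ'(r) = ν(r)·T(r); T'(r) = κ(r)ν(r)·N(r); and N'(r) = κ(r)ν(r)·T(r). If ∫₀^∞ exp(∫₀^r κ(s)ν(s) ds)·ν(r) dr = +∞, then γ is proper, i.e. ‖γ(r)‖ → +∞ (in the Euclidean norm) as r → +∞. -/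
/-!
The sum and difference of the Frenet frame solve the scalar equations `(T ± N)' = ±κν (T ± N)`,
so `T + N = e^K (T₀ + N₀)` and `T - N = e^{-K} (T₀ - N₀)` with `K = ∫₀^r κν`. The vector
`w = T₀ - N₀` is lightlike and `q(T₀ + N₀, w) = 2`, hence `q(T, w) = e^K` and
`q(γ(r), w) = q(γ(0), w) + ∫₀^r e^K ν → ∞`. Since `|q(v, w)| ≤ ‖v‖ ‖w‖`, `‖γ(r)‖ → ∞`.
-/

open Set MeasureTheory
open scoped Topology ENNReal

noncomputable section

open Filter Real

def minkowskiForm (v w : E2) : ℝ := v 0 * w 0 - v 1 * w 1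

lemma minkowskiForm_smul_left (a : ℝ) (v w : E2) :
    minkowskiForm (a • v) w = a * minkowskiForm v w := by
  simp only [minkowskiForm, PiLp.smul_apply, smul_eq_mul]
  ring

lemma abs_minkowskiForm_le (v w : E2) : |minkowskiForm v w| ≤ ‖v‖ * ‖w‖ := by
  have hv : ‖v‖ ^ 2 = v 0 ^ 2 + v 1 ^ 2 := by
    simp [EuclideanSpace.norm_sq_eq, Fin.sum_univ_two]
  have hw : ‖w‖ ^ 2 = w 0 ^ 2 + w 1 ^ 2 := by
    simp [EuclideanSpace.norm_sq_eq, Fin.sum_univ_two]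
  refine abs_le_of_sq_le_sq' ?_ (by positivity) |> abs_le.2
  rw [mul_pow, hv, hw]
  simp only [minkowskiForm]
  nlinarith [sq_nonneg (v 0 * w 1 + v 1 * w 0)]

lemma minkowskiForm_eq_of_null_frame {t n t₀ n₀ : E2} {c : ℝ}
    (hplus : t + n = c • (t₀ + n₀)) (hminus : t - n = c⁻¹ • (t₀ - n₀))
    (htt : minkowskiForm t₀ t₀ = 1) (hnn : minkowskiForm n₀ n₀ = -1)
    (htn : minkowskiForm t₀ n₀ = 0) :
    minkowskiForm t (t₀ - n₀) = c := by
  have ht : t = (2 : ℝ)⁻¹ • ((t + n) + (t - n)) := by module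
  rw [ht, hplus, hminus]
  simp only [minkowskiForm, PiLp.add_apply, PiLp.smul_apply, PiLp.sub_apply,
    smul_eq_mul] at htt hnn htn ⊢
  linear_combination (c / 2 + c⁻¹ / 2) * htt + (c⁻¹ / 2 - c / 2) * hnn - c⁻¹ * htn

lemma HasDerivWithinAt.minkowskiForm_const {f : ℝ → E2} {f' : E2} {s : Set ℝ} {x : ℝ}
    (hf : HasDerivWithinAt f f' s x) (w : E2) :
    HasDerivWithinAt (fun t => minkowskiForm (f t) w) (minkowskiForm f' w) s x := by
  have hcoord (i : Fin 2) : HasDerivWithinAt (fun t => f t i) (f' i) s x := by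
    have := (EuclideanSpace.proj (𝕜 := ℝ) i).hasFDerivAt.comp_hasDerivWithinAt x hf
    simp only [EuclideanSpace.coe_proj, PiLp.proj_apply] at this
    exact this
  exact ((hcoord 0).mul_const (w 0)).sub ((hcoord 1).mul_const (w 1))

lemma ContinuousOn.hasDerivWithinAt_integral_Ici {g : ℝ → ℝ} {a x : ℝ}
    (hg : ContinuousOn g (Ici a)) (hx : a ≤ x) :
    HasDerivWithinAt (fun r => ∫ t in a..r, g t) (g x) (Ici a) x := by
  rcases hx.eq_or_lt with rfl | hx
  · exact intervalIntegral.integral_hasDerivWithinAt_right IntervalIntegrable.refl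
      ((hg.mono Ioi_subset_Ici_self).stronglyMeasurableAtFilter_nhdsWithin measurableSet_Ioi a)
      ((hg a self_mem_Ici).mono Ioi_subset_Ici_self)
  · have hgx : ContinuousAt g x := hg.continuousAt (Ici_mem_nhds hx)
    refine (intervalIntegral.integral_hasDerivAt_right ?_ ?_ hgx).hasDerivWithinAt
    · exact (hg.mono ((uIcc_of_le hx.le).subset.trans Icc_subset_Ici_self)).intervalIntegrable
    · exact (hg.mono Ioi_subset_Ici_self).stronglyMeasurableAtFilter isOpen_Ioi x hx

lemma integral_eq_sub_of_hasDerivWithinAt_Ici {f f' : ℝ → ℝ} {a b : ℝ}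
    (hf : ∀ x ∈ Ici a, HasDerivWithinAt f (f' x) (Ici a) x) (hf' : ContinuousOn f' (Ici a))
    (hab : a ≤ b) : ∫ x in a..b, f' x = f b - f a :=
  intervalIntegral.integral_eq_sub_of_hasDeriv_right_of_le hab
    (fun x hx => (hf x hx.1).continuousWithinAt.mono Icc_subset_Ici_self)
    (fun x hx => (hf x hx.1.le).mono (Ioi_subset_Ici hx.1.le))
    ((hf'.mono Icc_subset_Ici_self).intervalIntegrable_of_Icc hab)

lemma eq_exp_smul_of_hasDerivWithinAt_Ici {E : Type*} [NormedAddCommGroup E] [NormedSpace ℝ E]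
    {f : ℝ → E} {K g : ℝ → ℝ} {a x : ℝ}
    (hK : ∀ r ∈ Ici a, HasDerivWithinAt K (g r) (Ici a) r)
    (hf : ∀ r ∈ Ici a, HasDerivWithinAt f (g r • f r) (Ici a) r) (hx : a ≤ x) :
    f x = exp (K x - K a) • f a := by
  have hderiv : ∀ r ∈ Ici a, HasDerivWithinAt (fun r => exp (-K r) • f r) 0 (Ici a) r := by
    intro r hr
    refine (((hK r hr).neg.exp).smul (hf r hr)).congr_deriv ?_
    rw [smul_smul, ← add_smul, mul_neg, add_neg_cancel, zero_smul]
  have hconst := constant_of_has_deriv_right_zero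
    (fun r hr => (hderiv r hr.1).continuousWithinAt.mono Icc_subset_Ici_self)
    (fun r hr => (hderiv r hr.1).mono (Ici_subset_Ici.2 hr.1)) x (right_mem_Icc.2 hx)
  calc f x = exp (K x) • exp (-K x) • f x := by rw [smul_smul, ← exp_add]; simp
    _ = exp (K x - K a) • f a := by
      rw [hconst, smul_smul, ← exp_add, sub_eq_add_neg]

lemma frenet_add_sub_eq_exp_smul {E : Type*} [NormedAddCommGroup E] [NormedSpace ℝ E]
    {T N : ℝ → E} {K g : ℝ → ℝ} {a x : ℝ}
    (hK : ∀ r ∈ Ici a, HasDerivWithinAt K (g r) (Ici a) r)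
    (hT : ∀ r ∈ Ici a, HasDerivWithinAt T (g r • N r) (Ici a) r)
    (hN : ∀ r ∈ Ici a, HasDerivWithinAt N (g r • T r) (Ici a) r) (hx : a ≤ x) :
    T x + N x = exp (K x - K a) • (T a + N a) ∧
      T x - N x = exp (-(K x - K a)) • (T a - N a) := by
  constructor
  · refine eq_exp_smul_of_hasDerivWithinAt_Ici (f := fun r => T r + N r) hK (fun r hr => ?_) hx
    exact ((hT r hr).add (hN r hr)).congr_deriv (by rw [smul_add, add_comm])
  · have hnegK : ∀ r ∈ Ici a, HasDerivWithinAt (fun r => -K r) (-g r) (Ici a) r :=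
      fun r hr => (hK r hr).neg
    convert eq_exp_smul_of_hasDerivWithinAt_Ici (f := fun r => T r - N r) hnegK (fun r hr => ?_) hx
      using 3
    · ring
    · exact ((hT r hr).sub (hN r hr)).congr_deriv (by rw [neg_smul, smul_sub, neg_sub])

lemma tendsto_norm_atTop_of_tendsto_minkowskiForm {γ : ℝ → E2} {w : E2}
    (h : Tendsto (fun r => minkowskiForm (γ r) w) atTop atTop) :
    Tendsto (fun r => ‖γ r‖) atTop atTop := by
  have hw : 0 < ‖w‖ := by
    refine norm_pos_iff.2 fun hw => not_tendsto_const_atTop (0 : ℝ) (atTop : Filter ℝ) ?_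
    simpa [hw, minkowskiForm] using h
  refine tendsto_atTop_mono (fun r => ?_) (h.atTop_div_const hw)
  rw [div_le_iff₀ hw]
  exact (le_abs_self _).trans (abs_minkowskiForm_le _ _)

theorem spacelike_curve_proper_general
    (γ T N : ℝ → E2) (ν κ : ℝ → ℝ)
    (hνc : ContinuousOn ν (Ici 0)) (hκc : ContinuousOn κ (Ici 0))
    (hTT : ∀ r ∈ Ici (0:ℝ), T r 0 * T r 0 - T r 1 * T r 1 = 1)
    (hNN : ∀ r ∈ Ici (0:ℝ), N r 0 * N r 0 - N r 1 * N r 1 = -1)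
    (hTN : ∀ r ∈ Ici (0:ℝ), T r 0 * N r 0 - T r 1 * N r 1 = 0)
    (hγ' : ∀ r ∈ Ici (0:ℝ), HasDerivWithinAt γ (ν r • T r) (Ici 0) r)
    (hT' : ∀ r ∈ Ici (0:ℝ), HasDerivWithinAt T ((κ r * ν r) • N r) (Ici 0) r)
    (hN' : ∀ r ∈ Ici (0:ℝ), HasDerivWithinAt N ((κ r * ν r) • T r) (Ici 0) r)
    (hint : Filter.Tendsto
      (fun r : ℝ => ∫ s in (0:ℝ)..r,
        Real.exp (∫ t in (0:ℝ)..s, κ t * ν t) * ν s)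
      Filter.atTop Filter.atTop) :
    Filter.Tendsto (fun r : ℝ => ‖γ r‖) Filter.atTop Filter.atTop := by
  set K : ℝ → ℝ := fun r => ∫ t in (0:ℝ)..r, κ t * ν t
  have hK : ∀ r ∈ Ici (0:ℝ), HasDerivWithinAt K (κ r * ν r) (Ici 0) r := fun _ hr =>
    (hκc.mul hνc).hasDerivWithinAt_integral_Ici hr
  have hK0 : K 0 = 0 := intervalIntegral.integral_same
  set w := T 0 - N 0
  have hTw : ∀ r ∈ Ici (0:ℝ), minkowskiForm (T r) w = exp (K r) := fun r hr => by
    obtain ⟨hplus, hminus⟩ := frenet_add_sub_eq_exp_smul hK hT' hN' hr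
    rw [hK0, sub_zero] at hplus hminus
    rw [exp_neg] at hminus
    exact minkowskiForm_eq_of_null_frame hplus hminus (hTT 0 self_mem_Ici) (hNN 0 self_mem_Ici)
      (hTN 0 self_mem_Ici)
  have hγw : ∀ r ∈ Ici (0:ℝ), HasDerivWithinAt (fun s => minkowskiForm (γ s) w)
      (exp (K r) * ν r) (Ici 0) r := fun r hr =>
    ((hγ' r hr).minkowskiForm_const w).congr_deriv
      (by rw [minkowskiForm_smul_left, hTw r hr, mul_comm])
  have hcont : ContinuousOn (fun s => exp (K s) * ν s) (Ici 0) :=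
    (continuous_exp.comp_continuousOn fun r hr => (hK r hr).continuousWithinAt).mul hνc
  refine tendsto_norm_atTop_of_tendsto_minkowskiForm (w := w) ?_
  refine (tendsto_atTop_add_const_left _ (minkowskiForm (γ 0) w) hint).congr' ?_
  filter_upwards [eventually_ge_atTop 0] with r hr
  rw [integral_eq_sub_of_hasDerivWithinAt_Ici hγw hcont hr]
  ring

/-- a spacelike curve in ℝ^{1,1} (with bilinear form
q(v,w) = v₁w₁ - v₂w₂) satisfying the Frenet equations with speed ν and curvature κ,
such that ∫₀^∞ exp(∫₀^r κν) ν dr = +∞, is proper: ‖γ(r)‖ → ∞ as r → ∞. -/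
theorem spacelike_curve_proper
    (γ T N : ℝ → E2) (ν κ : ℝ → ℝ)
    (hν : ∀ r ∈ Ici (0:ℝ), 0 < ν r) (hκ : ∀ r ∈ Ici (0:ℝ), 0 < κ r)
    (hνc : ContinuousOn ν (Ici 0)) (hκc : ContinuousOn κ (Ici 0))
    (hTT : ∀ r ∈ Ici (0:ℝ), T r 0 * T r 0 - T r 1 * T r 1 = 1)
    (hNN : ∀ r ∈ Ici (0:ℝ), N r 0 * N r 0 - N r 1 * N r 1 = -1)
    (hTN : ∀ r ∈ Ici (0:ℝ), T r 0 * N r 0 - T r 1 * N r 1 = 0)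
    (hγ' : ∀ r ∈ Ici (0:ℝ), HasDerivWithinAt γ (ν r • T r) (Ici 0) r)
    (hT' : ∀ r ∈ Ici (0:ℝ), HasDerivWithinAt T ((κ r * ν r) • N r) (Ici 0) r)
    (hN' : ∀ r ∈ Ici (0:ℝ), HasDerivWithinAt N ((κ r * ν r) • T r) (Ici 0) r)
    (hint : Filter.Tendsto
      (fun r : ℝ => ∫ s in (0:ℝ)..r,
        Real.exp (∫ t in (0:ℝ)..s, κ t * ν t) * ν s)
      Filter.atTop Filter.atTop) :
    Filter.Tendsto (fun r : ℝ => ‖γ r‖) Filter.atTop Filter.atTop :=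
  spacelike_curve_proper_general γ T N ν κ hνc hκc hTT hNN hTN hγ' hT' hN' hint

end
end
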